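/- If μ is a non-dominated matching that is not eligible-maximal (|E(μ)| < max over all matchings of |E|), then there exists a matching μ' with |E(μ')| = |E(μ)| + 1 and |B(μ')| < |B(μ)|; moreover (|E(μ')|, |B(μ')|) can be taken to be the next frontier point. -/

import Mathlib

structure Inst (P C : Type) where
  E : C → Finset P
  B : C → Finset P
  hBE : ∀ c, B c ⊆ E c

variable {P C : Type} [DecidableEq P] [Fintype P] [Fintype C]

def IsMatching (I : Inst P C) (μ : C → Option P) : Prop :=
  (∀ c c' p, μ c = some p → μ c' = some p → c = c') ∧
  ∀ c p, μ c = some p → p ∈ I.E c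

def eCount (μ : C → Option P) : ℕ :=
  (Finset.univ.filter fun c => (μ c).isSome).card

def bCount (I : Inst P C) (μ : C → Option P) : ℕ :=
  (Finset.univ.filter fun c => ∃ p ∈ I.B c, μ c = some p).card

def Dominates (I : Inst P C) (μ' μ : C → Option P) : Prop :=
  eCount μ ≤ eCount μ' ∧ bCount I μ ≤ bCount I μ' ∧
    (eCount μ < eCount μ' ∨ bCount I μ < bCount I μ')

def NonDominated (I : Inst P C) (μ : C → Option P) : Prop :=
  IsMatching I μ ∧ ∀ ν, IsMatching I ν → ¬ Dominates I ν μ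

def OnFrontier (I : Inst P C) (e b : ℕ) : Prop :=
  ∃ μ, NonDominated I μ ∧ eCount μ = e ∧ bCount I μ = b

/-! ### Auxiliary machinery -/

open Finset

/-- Iterating a partial successor function. -/
def orbit {C : Type} (next : C → Option C) (a : C) : ℕ → Option C
  | 0 => some a
  | n + 1 => (orbit next a n).bind next

lemma orbit_succ_some {C : Type} {next : C → Option C} {a : C} {n : ℕ} {c : C}
    (h : orbit next a (n + 1) = some c) :
    ∃ b, orbit next a n = some b ∧ next b = some c := by
  cases hb : orbit next a n with
  | none => simp [orbit, hb] at h
  | some b => exact ⟨b, rfl, by simpa [orbit, hb] using h⟩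

lemma orbit_none_mono {C : Type} {next : C → Option C} {a : C} {n m : ℕ}
    (hnm : n ≤ m) (h : orbit next a n = none) : orbit next a m = none := by
  induction m with
  | zero =>
      have hn : n = 0 := by omega
      exact hn ▸ h
  | succ m ih =>
      rcases Nat.lt_or_ge n (m+1) with hlt | hge
      · have := ih (by omega)
        simp [orbit, this]
      · have : n = m + 1 := by omega
        exact this ▸ h

/-- Orbits from two "source" points (points outside the range of `next`) that
meet must coincide in start and time. -/
lemma orbit_start_unique {C : Type} {next : C → Option C} {Q : C → Prop}
    (hinj : ∀ c c' d, next c = some d → next c' = some d → c = c')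
    (hQ : ∀ d e, next d = some e → ¬ Q e) :
    ∀ n m a a' c, Q a → Q a' → orbit next a n = some c → orbit next a' m = some c →
      a = a' ∧ n = m := by
  intro n
  induction n with
  | zero =>
      intro m a a' c ha ha' h1 h2
      have hca : c = a := by simpa [orbit] using h1.symm
      subst hca
      cases m with
      | zero =>
          have : c = a' := by simpa [orbit] using h2.symm
          exact ⟨this, rfl⟩
      | succ j =>
          obtain ⟨b, _, hb⟩ := orbit_succ_some h2
          exact absurd ha (hQ _ _ hb)
  | succ i ih =>
      intro m a a' c ha ha' h1 h2
      cases m with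
      | zero =>
          have hca : c = a' := by simpa [orbit] using h2.symm
          subst hca
          obtain ⟨b, _, hb⟩ := orbit_succ_some h1
          exact absurd ha' (hQ _ _ hb)
      | succ j =>
          obtain ⟨b, hb1, hb2⟩ := orbit_succ_some h1
          obtain ⟨b', hb1', hb2'⟩ := orbit_succ_some h2
          have hbb : b = b' := hinj _ _ _ hb2 hb2'
          subst hbb
          obtain ⟨e1, e2⟩ := ih j a a' b ha ha' hb1 hb1'
          exact ⟨e1, by omega⟩

lemma orbit_terminates {C : Type} [Finite C] {next : C → Option C} {Q : C → Prop}
    (hinj : ∀ c c' d, next c = some d → next c' = some d → c = c')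
    (hQ : ∀ d e, next d = some e → ¬ Q e) {a : C} (ha : Q a) :
    ∃ n, orbit next a n = none := by
  by_contra hc
  push_neg at hc
  have hs : ∀ n, ∃ c, orbit next a n = some c := by
    intro n
    cases h : orbit next a n with
    | none => exact absurd h (hc n)
    | some c => exact ⟨c, rfl⟩
  choose f hf using hs
  have hfinj : Function.Injective f := by
    intro n m hnm
    exact (orbit_start_unique hinj hQ n m a a (f n) ha ha (hf n) (hnm ▸ hf m)).2
  obtain ⟨n, m, hne, heq⟩ := Finite.exists_ne_map_eq_of_infinite f
  exact hne (hfinj heq)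

/-- Splitting an `eCount` over a predicate used for swapping. -/
lemma swap_eCount_aux (α β : C → Option P) (q : C → Prop) [DecidablePred q] :
    eCount (fun c => if q c then β c else α c)
      = (univ.filter fun c => q c ∧ (β c).isSome).card
        + (univ.filter fun c => ¬ q c ∧ (α c).isSome).card := by
  classical
  unfold eCount
  rw [← Finset.card_union_of_disjoint]
  · congr 1
    ext c
    by_cases hq : q c <;> simp [hq]
  · simp only [Finset.disjoint_left, mem_filter]
    tauto

lemma swap_eCount (α β : C → Option P) (q : C → Prop) [DecidablePred q] :
    eCount (fun c => if q c then β c else α c)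
        + (univ.filter fun c => q c ∧ (α c).isSome).card
      = eCount α + (univ.filter fun c => q c ∧ (β c).isSome).card := by
  have h1 := swap_eCount_aux α β q
  have h2 := swap_eCount_aux α α q
  have h3 : (fun c => if q c then α c else α c) = α := by
    funext c; simp
  rw [h3] at h2
  omega

lemma swap_bCount_aux (I : Inst P C) (α β : C → Option P) (q : C → Prop) [DecidablePred q] :
    bCount I (fun c => if q c then β c else α c)
      = (univ.filter fun c => q c ∧ ∃ p ∈ I.B c, β c = some p).card
        + (univ.filter fun c => ¬ q c ∧ ∃ p ∈ I.B c, α c = some p).card := by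
  classical
  unfold bCount
  rw [← Finset.card_union_of_disjoint]
  · congr 1
    ext c
    by_cases hq : q c <;> simp [hq]
  · simp only [Finset.disjoint_left, mem_filter]
    tauto

lemma swap_bCount (I : Inst P C) (α β : C → Option P) (q : C → Prop) [DecidablePred q] :
    bCount I (fun c => if q c then β c else α c) + bCount I (fun c => if q c then α c else β c)
      = bCount I α + bCount I β := by
  have h1 := swap_bCount_aux I α β q
  have h2 := swap_bCount_aux I β α q
  have h3 := swap_bCount_aux I α α q
  have h4 := swap_bCount_aux I β β q
  have e3 : (fun c => if q c then α c else α c) = α := by funext c; simp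
  have e4 : (fun c => if q c then β c else β c) = β := by funext c; simp
  rw [e3] at h3
  rw [e4] at h4
  omega

/-- The key exchange lemma: from two matchings with `eCount α < eCount β`
one can produce a matching one bigger than `α` and one smaller than `β`
preserving the total beneficiary count. -/
lemma exchange (I : Inst P C) (α β : C → Option P) (hα : IsMatching I α)
    (hβ : IsMatching I β) (h : eCount α < eCount β) :
    ∃ γ δ, IsMatching I γ ∧ IsMatching I δ ∧ eCount γ = eCount α + 1 ∧
      eCount δ + 1 = eCount β ∧
      bCount I γ + bCount I δ = bCount I α + bCount I β := by
  classical
  set next : C → Option C := fun c =>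
    if hc : ∃ c', (β c).isSome ∧ α c' = β c then some hc.choose else none with hnext
  have next_spec : ∀ c d, next c = some d → (β c).isSome ∧ α d = β c := by
    intro c d hd
    by_cases hc : ∃ c', (β c).isSome ∧ α c' = β c
    · rw [hnext] at hd
      simp only [dif_pos hc, Option.some.injEq] at hd
      exact hd ▸ ⟨hc.choose_spec.1, hc.choose_spec.2⟩
    · rw [hnext] at hd
      simp only [dif_neg hc] at hd
      exact absurd hd (by simp)
  have next_eq_some : ∀ c d, (β c).isSome → α d = β c → next c = some d := by
    intro c d hs hd
    have hc : ∃ c', (β c).isSome ∧ α c' = β c := ⟨d, hs, hd⟩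
    rw [hnext]
    simp only [dif_pos hc]
    obtain ⟨p, hp⟩ := Option.isSome_iff_exists.mp hs
    have h1 : α hc.choose = some p := by rw [hc.choose_spec.2, hp]
    have h2 : α d = some p := by rw [hd, hp]
    exact congrArg some (hα.1 _ _ _ h1 h2)
  have next_inj : ∀ c c' d, next c = some d → next c' = some d → c = c' := by
    intro c c' d h1 h2
    obtain ⟨hs1, he1⟩ := next_spec _ _ h1
    obtain ⟨hs2, he2⟩ := next_spec _ _ h2
    obtain ⟨p, hp⟩ := Option.isSome_iff_exists.mp hs1
    have : β c' = some p := by rw [← he2, he1, hp]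
    exact hβ.1 _ _ _ hp this
  set Q : C → Prop := fun c => (β c).isSome ∧ α c = none with hQdef
  have hQ : ∀ d e, next d = some e → ¬ Q e := by
    intro d e hd hq
    obtain ⟨hs, he⟩ := next_spec _ _ hd
    rw [hq.2] at he
    rw [← he] at hs
    simp at hs
  -- counting: strictly more sources than sinks
  set A : Finset C := univ.filter (fun c => (β c).isSome ∧ α c = none) with hA
  set Z : Finset C := univ.filter (fun c => (α c).isSome ∧ β c = none) with hZ
  have ecards : eCount α + A.card = eCount β + Z.card := by
    have e1 : eCount α = (univ.filter fun c => (α c).isSome ∧ (β c).isSome).card + Z.card := by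
      unfold eCount
      have h0 := Finset.card_filter_add_card_filter_not
        (s := univ.filter fun c : C => (α c).isSome) (p := fun c => (β c).isSome)
      rw [Finset.filter_filter, Finset.filter_filter] at h0
      have hz : (univ.filter fun c : C => (α c).isSome ∧ ¬ (β c).isSome) = Z := by
        ext c; simp [hZ, Option.not_isSome_iff_eq_none]
      rw [hz] at h0
      exact h0.symm
    have e2 : eCount β = (univ.filter fun c => (α c).isSome ∧ (β c).isSome).card + A.card := by
      unfold eCount
      have h0 := Finset.card_filter_add_card_filter_not
        (s := univ.filter fun c : C => (β c).isSome) (p := fun c => (α c).isSome)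
      rw [Finset.filter_filter, Finset.filter_filter] at h0
      have hx : (univ.filter fun c : C => (β c).isSome ∧ (α c).isSome)
          = (univ.filter fun c : C => (α c).isSome ∧ (β c).isSome) := by
        ext c; simp [and_comm]
      have ha : (univ.filter fun c : C => (β c).isSome ∧ ¬ (α c).isSome) = A := by
        ext c; simp [hA, Option.not_isSome_iff_eq_none]
      rw [hx, ha] at h0
      exact h0.symm
    omega
  have hterm : ∀ a : C, (β a).isSome ∧ α a = none → ∃ n, orbit next a n = none :=
    fun a ha => orbit_terminates (Q := fun c => (β c).isSome ∧ α c = none) next_inj hQ ha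
  have hend : ∀ a : C, (β a).isSome ∧ α a = none →
      ∃ k z, orbit next a k = some z ∧ next z = none := by
    intro a ha
    have T := hterm a ha
    have hN : orbit next a (Nat.find T) = none := Nat.find_spec T
    have hpos : Nat.find T ≠ 0 := by
      intro h0
      rw [h0] at hN
      simp [orbit] at hN
    obtain ⟨k, hkk⟩ : ∃ k, Nat.find T = k + 1 := ⟨Nat.find T - 1, by omega⟩
    have hksome : orbit next a k ≠ none := Nat.find_min T (by omega)
    cases hz : orbit next a k with
    | none => exact absurd hz hksome
    | some z =>
        refine ⟨k, z, hz, ?_⟩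
        rw [hkk] at hN
        simpa [orbit, hz] using hN
  have haug : ∃ a k z, ((β a).isSome ∧ α a = none) ∧ orbit next a k = some z ∧
      next z = none ∧ (β z).isSome := by
    by_contra hno
    push_neg at hno
    have hmap : ∀ a : C, a ∈ A → ∃ z ∈ Z, ∃ k, orbit next a k = some z ∧ next z = none := by
      intro a haA
      have hQa : (β a).isSome ∧ α a = none := by simpa [hA] using haA
      obtain ⟨k, z, hkz, hzn⟩ := hend a hQa
      have hβz : β z = none := by
        by_cases hb : (β z).isSome
        · exact absurd hb (hno a k z hQa hkz hzn)
        · exact Option.not_isSome_iff_eq_none.mp hb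
      have hαz : (α z).isSome := by
        cases k with
        | zero =>
            have hza : z = a := by simpa [orbit] using hkz.symm
            subst hza
            rw [hβz] at hQa
            simpa using hQa.1
        | succ j =>
            obtain ⟨b, hb1, hb2⟩ := orbit_succ_some hkz
            rw [(next_spec _ _ hb2).2]
            exact (next_spec _ _ hb2).1
      exact ⟨z, by simp [hZ, hαz, hβz], k, hkz, hzn⟩
    have hmap' : ∀ a : C, ∃ z, a ∈ A → z ∈ Z ∧ ∃ k, orbit next a k = some z ∧ next z = none := by
      intro a
      by_cases haA : a ∈ A
      · obtain ⟨z, hz1, k, hk1, hk2⟩ := hmap a haA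
        exact ⟨z, fun _ => ⟨hz1, k, hk1, hk2⟩⟩
      · exact ⟨a, fun hmem => absurd hmem haA⟩
    choose zOf hzOf using hmap'
    have hle : A.card ≤ Z.card := by
      apply Finset.card_le_card_of_injOn zOf
      · intro a ha
        exact (hzOf a ha).1
      · intro a ha a' ha' heq
        simp only [Finset.mem_coe] at ha ha'
        obtain ⟨_, k, hk, hkn⟩ := hzOf a ha
        obtain ⟨_, k', hk', hkn'⟩ := hzOf a' ha'
        have hQa : (β a).isSome ∧ α a = none := by simpa [hA] using ha
        have hQa' : (β a').isSome ∧ α a' = none := by simpa [hA] using ha'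
        rw [heq] at hk
        exact (orbit_start_unique (Q := fun c => (β c).isSome ∧ α c = none)
          next_inj hQ k k' a a' (zOf a') hQa hQa' hk hk').1
    omega
  obtain ⟨a, k, z, hQa, hk, hznone, hβz⟩ := haug
  set q : C → Prop := fun c => ∃ n, n ≤ k ∧ orbit next a n = some c with hq
  have hidx : ∀ n m c, orbit next a n = some c → orbit next a m = some c → n = m :=
    fun n m c h1 h2 => (orbit_start_unique (Q := fun c => (β c).isSome ∧ α c = none)
      next_inj hQ n m a a c hQa hQa h1 h2).2
  have horb : ∀ n, n ≤ k → ∃ c, orbit next a n = some c := by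
    intro n hn
    cases hc : orbit next a n with
    | some c => exact ⟨c, rfl⟩
    | none =>
        have hnone := orbit_none_mono hn hc
        rw [hnone] at hk
        exact absurd hk (by simp)
  set cs : ℕ → C := fun n => (orbit next a n).getD a with hcs
  have hcs_spec : ∀ n, n ≤ k → orbit next a n = some (cs n) := by
    intro n hn
    obtain ⟨c, hc⟩ := horb n hn
    rw [hc]
    simp [hcs, hc]
  have hcs0 : cs 0 = a := by simp [hcs, orbit]
  have hcsk : cs k = z := by simp [hcs, hk]
  have hcs_inj : ∀ n, n ≤ k → ∀ m, m ≤ k → cs n = cs m → n = m := by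
    intro n hn m hm he
    have h2 := hcs_spec m hm
    rw [← he] at h2
    exact hidx n m (cs n) (hcs_spec n hn) h2
  set Sf : Finset C := (Finset.range (k+1)).image cs with hSf
  have hmemSf : ∀ c, c ∈ Sf ↔ q c := by
    intro c
    simp only [hSf, Finset.mem_image, Finset.mem_range]
    constructor
    · rintro ⟨n, hn, rfl⟩
      exact ⟨n, by omega, hcs_spec n (by omega)⟩
    · rintro ⟨n, hn, hc⟩
      have : cs n = c := by simp [hcs, hc]
      exact ⟨n, by omega, this⟩
  have hαpath : ∀ n, 1 ≤ n → n ≤ k → (α (cs n)).isSome := by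
    intro n h1 hn
    obtain ⟨j, rfl⟩ : ∃ j, n = j + 1 := ⟨n - 1, by omega⟩
    obtain ⟨b, hb1, hb2⟩ := orbit_succ_some (hcs_spec (j+1) hn)
    rw [(next_spec _ _ hb2).2]
    exact (next_spec _ _ hb2).1
  have hβpath : ∀ n, n ≤ k → (β (cs n)).isSome := by
    intro n hn
    rcases Nat.lt_or_ge n k with hlt | hge
    · obtain ⟨b, hb1, hb2⟩ := orbit_succ_some (hcs_spec (n+1) (by omega))
      have hbc : b = cs n := by
        rw [hcs_spec n hn] at hb1
        exact (Option.some.inj hb1).symm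
      rw [← hbc]
      exact (next_spec _ _ hb2).1
    · have hnk : n = k := by omega
      rw [hnk, hcsk]
      exact hβz
  have hclosure : ∀ c c', q c → (β c).isSome → α c' = β c → q c' := by
    intro c c' hc hs he
    obtain ⟨n, hn, hoc⟩ := hc
    have hnc : next c = some c' := next_eq_some c c' hs he
    have hnk : n ≠ k := by
      intro h0
      subst h0
      rw [hk] at hoc
      have : z = c := Option.some.inj hoc
      rw [this] at hznone
      rw [hznone] at hnc
      exact absurd hnc (by simp)
    refine ⟨n + 1, by omega, ?_⟩
    show (orbit next a n).bind next = some c'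
    rw [hoc]
    simpa using hnc
  have hclosure' : ∀ c c', q c → (α c).isSome → β c' = α c → q c' := by
    intro c c' hc hs he
    obtain ⟨n, hn, hoc⟩ := hc
    cases n with
    | zero =>
        have hca : a = c := by simpa [orbit] using hoc
        rw [← hca, hQa.2] at hs
        simp at hs
    | succ j =>
        obtain ⟨b, hb1, hb2⟩ := orbit_succ_some hoc
        have hab : α c = β b := (next_spec _ _ hb2).2
        obtain ⟨p, hp⟩ := Option.isSome_iff_exists.mp hs
        have h1 : β c' = some p := by rw [he, hp]
        have h2 : β b = some p := by rw [← hab, hp]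
        have hcb : c' = b := hβ.1 _ _ _ h1 h2
        exact hcb ▸ ⟨j, by omega, hb1⟩
  have hcardα : (univ.filter fun c => q c ∧ (α c).isSome).card = k := by
    have h1 : (univ.filter fun c => q c ∧ (α c).isSome) = Sf.filter (fun c => (α c).isSome) := by
      ext c
      simp [Finset.mem_filter, hmemSf c]
    have h2 : (Finset.range (k+1)).filter (fun n => (α (cs n)).isSome) = Finset.Ico 1 (k+1) := by
      ext n
      simp only [Finset.mem_filter, Finset.mem_range, Finset.mem_Ico]
      constructor
      · rintro ⟨hn, hs⟩
        refine ⟨?_, hn⟩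
        by_contra h0
        have hn0 : n = 0 := by omega
        rw [hn0, hcs0, hQa.2] at hs
        simp at hs
      · rintro ⟨h1', hn⟩
        exact ⟨hn, hαpath n h1' (by omega)⟩
    rw [h1, hSf, Finset.filter_image, h2, Finset.card_image_of_injOn ?inj]
    case inj =>
      intro n hn m hm he
      have h3 := Finset.mem_Ico.mp (Finset.mem_coe.mp hn)
      have h4 := Finset.mem_Ico.mp (Finset.mem_coe.mp hm)
      exact hcs_inj n (by omega) m (by omega) he
    simp
  have hcardβ : (univ.filter fun c => q c ∧ (β c).isSome).card = k + 1 := by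
    have h1 : (univ.filter fun c => q c ∧ (β c).isSome) = Sf := by
      ext c
      simp only [Finset.mem_filter, Finset.mem_univ, true_and, hmemSf c]
      constructor
      · exact fun hh => hh.1
      · intro hh
        refine ⟨hh, ?_⟩
        obtain ⟨n, hn, ho⟩ := hh
        have : cs n = c := by simp [hcs, ho]
        rw [← this]
        exact hβpath n hn
    rw [h1, hSf, Finset.card_image_of_injOn ?inj2, Finset.card_range]
    case inj2 =>
      intro n hn m hm he
      have h3 := Finset.mem_range.mp (Finset.mem_coe.mp hn)
      have h4 := Finset.mem_range.mp (Finset.mem_coe.mp hm)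
      exact hcs_inj n (by omega) m (by omega) he
  have hswe := swap_eCount α β q
  rw [hcardα, hcardβ] at hswe
  have hswe' := swap_eCount β α q
  rw [hcardα, hcardβ] at hswe'
  refine ⟨(fun c => if q c then β c else α c), (fun c => if q c then α c else β c),
    ⟨?_, ?_⟩, ⟨?_, ?_⟩, by omega, by omega, swap_bCount I α β q⟩
  · intro c c' p h1 h2
    by_cases hc : q c <;> by_cases hc' : q c' <;>
      simp only [hc, hc', if_true, if_false, if_pos, if_neg, not_false_iff] at h1 h2
    · exact hβ.1 _ _ _ h1 h2
    · exact absurd (hclosure c c' hc (by rw [h1]; rfl) (h2.trans h1.symm)) hc'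
    · exact absurd (hclosure c' c hc' (by rw [h2]; rfl) (h1.trans h2.symm)) hc
    · exact hα.1 _ _ _ h1 h2
  · intro c p hp
    by_cases hc : q c
    · simp only [hc, if_true] at hp
      exact hβ.2 _ _ hp
    · simp only [hc, if_false] at hp
      exact hα.2 _ _ hp
  · intro c c' p h1 h2
    by_cases hc : q c <;> by_cases hc' : q c' <;>
      simp only [hc, hc', if_true, if_false, if_pos, if_neg, not_false_iff] at h1 h2
    · exact hα.1 _ _ _ h1 h2
    · exact absurd (hclosure' c c' hc (by rw [h1]; rfl) (h2.trans h1.symm)) hc'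
    · exact absurd (hclosure' c' c hc' (by rw [h2]; rfl) (h1.trans h2.symm)) hc
    · exact hβ.1 _ _ _ h1 h2
  · intro c p hp
    by_cases hc : q c
    · simp only [hc, if_true] at hp
      exact hα.2 _ _ hp
    · simp only [hc, if_false] at hp
      exact hβ.2 _ _ hp

lemma exists_matching_eCount (I : Inst P C) :
    ∀ (d : ℕ) (ν : C → Option P) (m : ℕ), IsMatching I ν → eCount ν = m + d →
      ∃ ρ, IsMatching I ρ ∧ eCount ρ = m := by
  intro d
  induction d with
  | zero =>
      intro ν m hν he
      exact ⟨ν, hν, by omega⟩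
  | succ d ih =>
      intro ν m hν he
      classical
      obtain ⟨c, hc⟩ : ∃ c, (ν c).isSome := by
        by_contra hno
        push_neg at hno
        have h0 : eCount ν = 0 := by
          unfold eCount
          rw [Finset.card_eq_zero]
          ext x
          simp [hno x]
        omega
      set ρ0 : C → Option P := fun c' => if c' = c then none else ν c' with hρ0
      have hm : IsMatching I ρ0 := by
        constructor
        · intro x y p h1 h2
          have h1' : ν x = some p := by
            by_cases hx : x = c
            · simp [hρ0, hx] at h1
            · simpa [hρ0, hx] using h1
          have h2' : ν y = some p := by
            by_cases hy : y = c
            · simp [hρ0, hy] at h2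
            · simpa [hρ0, hy] using h2
          exact hν.1 x y p h1' h2'
        · intro x p hp
          by_cases hx : x = c
          · simp [hρ0, hx] at hp
          · exact hν.2 x p (by simpa [hρ0, hx] using hp)
      have hcount : eCount ρ0 + 1 = eCount ν := by
        unfold eCount
        have hset : (Finset.univ.filter fun x => (ρ0 x).isSome)
            = (Finset.univ.filter fun x => (ν x).isSome).erase c := by
          ext x
          simp only [Finset.mem_filter, Finset.mem_erase, Finset.mem_univ, true_and]
          by_cases hx : x = c
          · simp [hρ0, hx]
          · simp [hρ0, hx, and_comm]
        rw [hset, Finset.card_erase_of_mem (by simp [hc])]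
        have hpos : 0 < (Finset.univ.filter fun x => (ν x).isSome).card :=
          Finset.card_pos.mpr ⟨c, by simp [hc]⟩
        omega
      exact ih ρ0 m hm (by omega)



theorem next_frontier_point (I : Inst P C) (μ : C → Option P)
    (h : NonDominated I μ)
    (hlt : ∃ ν, IsMatching I ν ∧ eCount μ < eCount ν) :
    ∃ μ', IsMatching I μ' ∧ eCount μ' = eCount μ + 1 ∧ bCount I μ' < bCount I μ ∧
      OnFrontier I (eCount μ + 1) (bCount I μ') := by
  classical
  obtain ⟨ν, hν, hνlt⟩ := hlt
  obtain ⟨ρ0, hρ0, hρ0e⟩ := exists_matching_eCount I (eCount ν - (eCount μ + 1)) ν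
    (eCount μ + 1) hν (by omega)
  set S : Set ℕ := {n | ∃ ρ, IsMatching I ρ ∧ eCount ρ = eCount μ + 1 ∧ bCount I ρ = n} with hS
  have hSne : S.Nonempty := ⟨bCount I ρ0, ρ0, hρ0, hρ0e, rfl⟩
  have hSbdd : BddAbove S := by
    refine ⟨Fintype.card C, ?_⟩
    rintro n ⟨ρ, _, _, hb⟩
    rw [← hb]
    unfold bCount
    exact le_trans (Finset.card_filter_le _ _) (by simp)
  obtain ⟨μ', hμ'm, hμ'e, hμ'b⟩ := Nat.sSup_mem hSne hSbdd
  have hblt : bCount I μ' < bCount I μ := by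
    by_contra hge
    push_neg at hge
    exact h.2 μ' hμ'm ⟨by omega, hge, Or.inl (by omega)⟩
  refine ⟨μ', hμ'm, hμ'e, hblt, μ', ⟨hμ'm, ?_⟩, hμ'e, rfl⟩
  rintro ν' hν' ⟨hde, hdb, hstrict⟩
  have hub : ∀ ρ, IsMatching I ρ → eCount ρ = eCount μ + 1 → bCount I ρ ≤ bCount I μ' := by
    intro ρ hρ he
    rw [hμ'b]
    exact le_csSup hSbdd ⟨ρ, hρ, he, rfl⟩
  rcases Nat.lt_or_ge (eCount ν') (eCount μ + 2) with hcase | hcase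
  · have he : eCount ν' = eCount μ + 1 := by omega
    have := hub ν' hν' he
    omega
  · obtain ⟨γ, δ, hγ, hδ, hγe, hδe, hsum⟩ := exchange I μ ν' h.1 hν' (by omega)
    have hγle : bCount I γ ≤ bCount I μ' := hub γ hγ hγe
    have hδb : bCount I μ ≤ bCount I δ := by omega
    exact h.2 δ hδ ⟨by omega, hδb, Or.inl (by omega)⟩
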